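/- For any selection of at least k-Pareto optimal elements T_k with μ(T_k) < ∞, cho(T_k) = μ(T_k)² − 2 ∫_{[0,k]} x d(po∗μ)(x), where po∗μ is the pushforward of μ under po. -/

import Mathlib

open MeasureTheory
open scoped ENNReal

/-- `k`-Pareto optimality of `x`. -/
noncomputable def po {X : Type*} [MeasurableSpace X] (μ : Measure X)
    (R : X → X → Prop) (x : X) : ℝ≥0∞ :=
  μ {y | R y x ∧ ¬ R x y}

/-- The set `T_k` of at least `k`-Pareto optimal elements. -/
def Tset {X : Type*} [MeasurableSpace X] (μ : Measure X)
    (R : X → X → Prop) (k : ℝ≥0∞) : Set X :=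
  {x | po μ R x ≤ k}

/-- The choice offered by a set `A`. -/
noncomputable def cho {X : Type*} [MeasurableSpace X] (μ : Measure X)
    (R : X → X → Prop) (A : Set X) : ℝ≥0∞ :=
  (μ.prod μ) {p : X × X | p.1 ∈ A ∧ p.2 ∈ A ∧ (R p.1 p.2 ↔ R p.2 p.1)}

/-!
Split `T_k × T_k` into the pairs on which `R` is symmetric, which `cho` measures, and the pairs
that are strictly ordered one way or the other. Swapping coordinates exchanges the two strict
parts, so `μ(T_k)² = cho(T_k) + 2 μ²(S)` with `S = {(x, y) : y R* x}`. Since `T_k` is closed under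
strict predecessors, the fibre of `S` over `x ∈ T_k` is the whole set `{y : y R* x}`, so Tonelli
gives `μ²(S) = ∫_{T_k} po dμ`, which is the pushforward integral over `[0, k]`.
-/

section StrictPairs

variable {X : Type*} [MeasurableSpace X] {μ : Measure X} {R : X → X → Prop} {A : Set X}

/-- The pairs `(x, y)` of `A × A` with `y R* x`; the fibre over `x` is the set measured by
`po μ R x`. -/
def strictPairs (R : X → X → Prop) (A : Set X) : Set (X × X) :=
  {p | p.1 ∈ A ∧ p.2 ∈ A ∧ R p.2 p.1 ∧ ¬ R p.1 p.2}

lemma measurableSet_strictPairs (hR : MeasurableSet {p : X × X | R p.1 p.2})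
    (hA : MeasurableSet A) : MeasurableSet (strictPairs R A) := by
  have hR' : MeasurableSet {p : X × X | R p.2 p.1} := measurable_swap hR
  have h : strictPairs R A
      = A ×ˢ A ∩ ({p : X × X | R p.2 p.1} ∩ {p : X × X | R p.1 p.2}ᶜ) := by
    ext p
    simp only [strictPairs, Set.mem_ofPred_eq, Set.mem_inter_iff, Set.mem_prod,
      Set.mem_compl_iff]
    tauto
  rw [h]
  exact (hA.prod hA).inter (hR'.inter hR.compl)

lemma measure_prod_self_swap_preimage [SFinite μ] (S : Set (X × X)) :
    (μ.prod μ) (Prod.swap ⁻¹' S) = (μ.prod μ) S :=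
  Measure.measurePreserving_swap.measure_preimage_emb
    MeasurableEquiv.prodComm.measurableEmbedding S

lemma measure_mul_self_eq_cho_add [SFinite μ] (hR : MeasurableSet {p : X × X | R p.1 p.2})
    (hA : MeasurableSet A) :
    μ A * μ A = cho μ R A + 2 * (μ.prod μ) (strictPairs R A) := by
  have hS := measurableSet_strictPairs hR hA
  have hpartition : A ×ˢ A
      = {p : X × X | p.1 ∈ A ∧ p.2 ∈ A ∧ (R p.1 p.2 ↔ R p.2 p.1)}
        ∪ Prod.swap ⁻¹' strictPairs R A ∪ strictPairs R A := by
    ext p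
    simp only [strictPairs, Set.mem_prod, Set.mem_union, Set.mem_preimage, Set.mem_ofPred_eq,
      Prod.fst_swap, Prod.snd_swap]
    tauto
  have hdisj₁ : Disjoint {p : X × X | p.1 ∈ A ∧ p.2 ∈ A ∧ (R p.1 p.2 ↔ R p.2 p.1)}
      (Prod.swap ⁻¹' strictPairs R A) := by
    rw [Set.disjoint_left]
    rintro p ⟨-, -, hiff⟩ ⟨-, -, hlt, hngt⟩
    exact hngt (hiff.mp hlt)
  have hdisj₂ : Disjoint ({p : X × X | p.1 ∈ A ∧ p.2 ∈ A ∧ (R p.1 p.2 ↔ R p.2 p.1)}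
      ∪ Prod.swap ⁻¹' strictPairs R A) (strictPairs R A) := by
    rw [Set.disjoint_left]
    rintro p (⟨-, -, hiff⟩ | ⟨-, -, hlt, -⟩) ⟨-, -, hlt', hngt'⟩
    · exact hngt' (hiff.mpr hlt')
    · exact hngt' hlt
  rw [← Measure.prod_prod, hpartition, measure_union hdisj₂ hS,
    measure_union hdisj₁ (measurable_swap hS), measure_prod_self_swap_preimage, two_mul,
    add_assoc]
  rfl

lemma measure_prod_strictPairs_eq_setLIntegral_po [SFinite μ]
    (hR : MeasurableSet {p : X × X | R p.1 p.2}) (hA : MeasurableSet A)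
    (hsel : ∀ x ∈ A, ∀ y, (R y x ∧ ¬ R x y) → y ∈ A) :
    (μ.prod μ) (strictPairs R A) = ∫⁻ x in A, po μ R x ∂μ := by
  rw [Measure.prod_apply (measurableSet_strictPairs hR hA), ← lintegral_indicator hA]
  refine lintegral_congr fun x ↦ ?_
  by_cases hx : x ∈ A
  · rw [Set.indicator_of_mem hx]
    congr 1
    ext y
    exact ⟨fun ⟨_, _, hy⟩ ↦ hy, fun hy ↦ ⟨hx, hsel x hx y hy, hy⟩⟩
  · rw [Set.indicator_of_notMem hx, ← measure_empty (μ := μ)]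
    congr 1
    ext y
    exact ⟨fun ⟨hx', _⟩ ↦ hx hx', fun h ↦ h.elim⟩

end StrictPairs

lemma setLIntegral_map_po_Icc {X : Type*} [MeasurableSpace X] {μ : Measure X}
    {R : X → X → Prop} (hpo : Measurable (po μ R)) (k : ℝ≥0∞) :
    ∫⁻ x in Set.Icc 0 k, x ∂(μ.map (po μ R)) = ∫⁻ x in Tset μ R k, po μ R x ∂μ := by
  rw [← bot_eq_zero, Set.Icc_bot]
  exact setLIntegral_map measurableSet_Iic measurable_id hpo

/-- For any selection of at least `k`-Pareto optimal elements `T_k` with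
`μ(T_k) < ∞`, `cho(T_k) = μ(T_k)² − 2 ∫_{[0,k]} x d(po∗μ)(x)`, where
`po∗μ` is the pushforward (image) measure of `μ` under `po`. -/
theorem cho_Tk_eq_pushforward_integral
    {X : Type*} [MeasurableSpace X] (μ : Measure X) [SigmaFinite μ]
    (R : X → X → Prop) (hR : MeasurableSet {p : X × X | R p.1 p.2})
    (hpo : Measurable (po μ R)) (k : ℝ≥0∞)
    (hTsel : ∀ x ∈ Tset μ R k, ∀ y, (R y x ∧ ¬ R x y) → y ∈ Tset μ R k)
    (hTfin : μ (Tset μ R k) < ⊤) :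
    (cho μ R (Tset μ R k)).toReal
      = (μ (Tset μ R k)).toReal ^ 2
        - 2 * (∫⁻ x in Set.Icc (0 : ℝ≥0∞) k, x ∂(μ.map (po μ R))).toReal := by
  have hT : MeasurableSet (Tset μ R k) := hpo measurableSet_Iic
  have hsplit := measure_mul_self_eq_cho_add (μ := μ) hR hT
  rw [measure_prod_strictPairs_eq_setLIntegral_po hR hT hTsel] at hsplit
  rw [setLIntegral_map_po_Icc hpo]
  have hfin : cho μ R (Tset μ R k) + 2 * ∫⁻ x in Tset μ R k, po μ R x ∂μ ≠ ⊤ :=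
    hsplit ▸ ENNReal.mul_ne_top hTfin.ne hTfin.ne
  obtain ⟨hcho, hint⟩ := ENNReal.add_ne_top.mp hfin
  have hsplit_real := congrArg ENNReal.toReal hsplit
  rw [ENNReal.toReal_mul, ENNReal.toReal_add hcho hint, ENNReal.toReal_mul,
    ENNReal.toReal_ofNat] at hsplit_real
  linarith
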